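/- For n ≥ 1 let r_n = 1/(4n(n+1)) and let B_n = {(x,y) ∈ ℝ² : ((x)² + (y − 1/n)²)^(1/2) < r_n} be the open disc of radius r_n centered at (0, 1/n). Define f : ℝ² → ℝ by: f(x,y) = 0 if y ≥ 0 and (x,y) ∉ ⋃_{n≥1} B_n; f(x,y) = 1/y if y < 0; and f(x,y) = n + tan((π/(2 r_n)) · ((x)² + (y − 1/n)²)^(1/2)) if (x,y) ∈ B_n. Let G = {(p, f p) : p ∈ ℝ²} be the graph of f and π : ℝ² × ℝ → ℝ² the projection. Then for every set U ⊆ G relatively open in G with ((0,0),0) ∈ U and every set E with U ⊆ E ⊆ G such that E is a continuum and locally connected as a subspace, the complement ℝ² \ π(E) has infinitely many connected components. -/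
import Mathlib


open Set Topology Real

/-- The radius `r n = 1/(4n(n+1))`. -/
noncomputable def exRadius (n : ℕ) : ℝ := 1 / (4 * n * (n + 1))

/-- The open disc `B n` of radius `r n` centered at `(0, 1/n)`. -/
def exDisc (n : ℕ) : Set (ℝ × ℝ) :=
  {p : ℝ × ℝ | Real.sqrt (p.1 ^ 2 + (p.2 - 1 / n) ^ 2) < exRadius n}

lemma exRadius_pos {n : ℕ} (hn : 1 ≤ n) : 0 < exRadius n := by
  have h : (1 : ℝ) ≤ n := by exact_mod_cast hn
  unfold exRadius
  positivity

lemma exRadius_anti {n m : ℕ} (hn : 1 ≤ n) (h : n ≤ m) : exRadius m ≤ exRadius n := by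
  have h0 : (1 : ℝ) ≤ n := by exact_mod_cast hn
  have h1 : (n : ℝ) ≤ m := by exact_mod_cast h
  unfold exRadius
  have h2 : (0:ℝ) < 4 * n * (n+1) := by nlinarith
  have h3 : (4:ℝ) * n * (n+1) ≤ 4 * m * (m+1) := by nlinarith
  gcongr

/-- Separation of centers: for distinct indices, `|1/n - 1/m| ≥ 2 rₙ + 2 rₘ`. -/
lemma center_sep {n m : ℕ} (hn : 1 ≤ n) (hm : 1 ≤ m) (hnm : n ≠ m) :
    2 * exRadius n + 2 * exRadius m ≤ |1 / (n : ℝ) - 1 / (m : ℝ)| := by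
  wlog h : n < m generalizing n m
  · have := this hm hn (Ne.symm hnm) (by omega)
    rw [abs_sub_comm]; linarith
  have hn0 : (1 : ℝ) ≤ n := by exact_mod_cast hn
  have hm0 : (1 : ℝ) ≤ m := by exact_mod_cast hm
  have hlt : (n : ℝ) + 1 ≤ m := by exact_mod_cast h
  have hrm : exRadius m ≤ exRadius n := exRadius_anti hn h.le
  have key : 4 * exRadius n ≤ 1 / (n : ℝ) - 1 / (m : ℝ) := by
    have h1 : 1 / (n : ℝ) - 1 / (m : ℝ) ≥ 1 / (n : ℝ) - 1 / ((n : ℝ) + 1) := by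
      gcongr
    have h2 : 1 / (n : ℝ) - 1 / ((n : ℝ) + 1) = 1 / ((n : ℝ) * ((n : ℝ) + 1)) := by
      rw [div_sub_div _ _ (by linarith) (by linarith)]
      ring_nf
    have h3 : 4 * exRadius n = 1 / ((n : ℝ) * ((n : ℝ) + 1)) := by
      unfold exRadius
      rw [mul_one_div, div_eq_div_iff (by nlinarith) (by nlinarith)]
      ring
    linarith
  have habs : 1 / (n : ℝ) - 1 / (m : ℝ) ≤ |1 / (n : ℝ) - 1 / (m : ℝ)| := le_abs_self _
  linarith

/-- The "Euclidean distance to the center `(0, 1/n)`" function. -/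
noncomputable def exG (n : ℕ) (p : ℝ × ℝ) : ℝ :=
  Real.sqrt (p.1 ^ 2 + (p.2 - 1 / n) ^ 2)

lemma exG_continuous (n : ℕ) : Continuous (exG n) := by
  unfold exG
  fun_prop

lemma exG_center (n : ℕ) : exG n ((0 : ℝ), 1 / (n : ℝ)) = 0 := by
  simp [exG]

lemma exG_nonneg (n : ℕ) (p : ℝ × ℝ) : 0 ≤ exG n p := Real.sqrt_nonneg _

/-- `|y - 1/n| ≤ exG n p`. -/
lemma abs_snd_le_exG (n : ℕ) (p : ℝ × ℝ) : |p.2 - 1 / n| ≤ exG n p := by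
  rw [← Real.sqrt_sq_eq_abs]
  apply Real.sqrt_le_sqrt
  nlinarith [sq_nonneg p.1]

/-- `|x| ≤ exG n p`. -/
lemma abs_fst_le_exG (n : ℕ) (p : ℝ × ℝ) : |p.1| ≤ exG n p := by
  rw [← Real.sqrt_sq_eq_abs]
  apply Real.sqrt_le_sqrt
  nlinarith [sq_nonneg (p.2 - 1 / n)]

lemma exG_center_pair {n m : ℕ} :
    exG n ((0 : ℝ), 1 / (m : ℝ)) = |1 / (m : ℝ) - 1 / (n : ℝ)| := by
  simp [exG, Real.sqrt_sq_eq_abs]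

/-- For the example function `f`, for every relatively open subset `U` of the
graph containing `((0,0),0)` and every locally connected continuum `E` with `U ⊆ E ⊆ graph f`,
the complement `ℝ² \ π(E)` has infinitely many connected components. -/
theorem stmt12 (f : ℝ × ℝ → ℝ)
    (hf0 : ∀ p : ℝ × ℝ, 0 ≤ p.2 → (∀ n : ℕ, 1 ≤ n → p ∉ exDisc n) → f p = 0)
    (hfneg : ∀ p : ℝ × ℝ, p.2 < 0 → f p = 1 / p.2)
    (hfB : ∀ n : ℕ, 1 ≤ n → ∀ p ∈ exDisc n,
      f p = n + Real.tan (π / (2 * exRadius n) *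
        Real.sqrt (p.1 ^ 2 + (p.2 - 1 / n) ^ 2)))
    : ∀ U E : Set ((ℝ × ℝ) × ℝ),
      (∃ V : Set ((ℝ × ℝ) × ℝ), IsOpen V ∧ U = V ∩ Set.range fun p => (p, f p)) →
      (((0 : ℝ), (0 : ℝ)), (0 : ℝ)) ∈ U →
      U ⊆ E → E ⊆ Set.range (fun p => (p, f p)) →
      IsCompact E → IsConnected E → LocallyConnectedSpace E →
      {C : Set (ℝ × ℝ) |
        ∃ x ∈ (Prod.fst '' E)ᶜ, C = connectedComponentIn (Prod.fst '' E)ᶜ x}.Infinite := by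
  intro U E hU hU0 hUE hEG hEcomp _hEconn _hloc
  obtain ⟨V, hVopen, hUV⟩ := hU
  have hbase : ((((0 : ℝ), (0 : ℝ)), (0 : ℝ))) ∈ V := by
    have := hU0
    rw [hUV] at this
    exact this.1
  obtain ⟨ε, hε, hball⟩ := Metric.isOpen_iff.1 hVopen _ hbase
  -- bound on the third coordinate over E
  have hEne : E.Nonempty := ⟨_, hUE hU0⟩
  obtain ⟨q0, -, hM⟩ := hEcomp.exists_isMaxOn hEne continuous_snd.continuousOn
  set M : ℝ := q0.2 with hMdef
  -- choice of the threshold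
  obtain ⟨N₀, hN₀⟩ := exists_nat_gt (max (2 / ε) M)
  set N1 : ℕ := max N₀ 1 with hN1def
  have hN1one : 1 ≤ N1 := le_max_right _ _
  set S : Set (ℝ × ℝ) := (Prod.fst '' E)ᶜ with hSdef
  -- the centers
  set c : ℕ → ℝ × ℝ := fun n => ((0 : ℝ), 1 / (n : ℝ)) with hcdef
  -- basic facts for n ≥ N1
  have hnε : ∀ n : ℕ, N1 ≤ n → 2 / (n : ℝ) < ε := by
    intro n hn
    have h1 : (N₀ : ℝ) ≤ n := by exact_mod_cast le_trans (le_max_left _ _) hn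
    have h2 : 2 / ε < (n : ℝ) := lt_of_lt_of_le (lt_of_le_of_lt (le_max_left _ M) hN₀) h1
    have hn0 : (0 : ℝ) < n := lt_of_le_of_lt (by positivity) h2
    rw [div_lt_iff₀ hn0]
    calc (2 : ℝ) = ε * (2 / ε) := by field_simp
    _ < ε * n := by
        exact mul_lt_mul_of_pos_left h2 hε
  have hMn : ∀ n : ℕ, N1 ≤ n → M < (n : ℝ) := by
    intro n hn
    have h1 : (N₀ : ℝ) ≤ n := by exact_mod_cast le_trans (le_max_left _ _) hn
    have h2 : M < (N₀ : ℝ) := lt_of_le_of_lt (le_max_right (2 / ε) M) hN₀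
    linarith
  -- center not in the projection
  have hcenter : ∀ n : ℕ, N1 ≤ n → c n ∈ S := by
    intro n hn
    have hn1 : 1 ≤ n := le_trans hN1one hn
    intro hmem
    obtain ⟨e, heE, he1⟩ := hmem
    obtain ⟨p, hp⟩ := hEG heE
    simp only at hp
    have hp1 : p = c n := by rw [← he1, ← hp]
    have hdisc : c n ∈ exDisc n := by
      simp only [exDisc, hcdef, mem_setOf_eq]
      have : Real.sqrt ((0 : ℝ) ^ 2 + (1 / (n : ℝ) - 1 / (n : ℝ)) ^ 2) = 0 := by simp
      rw [this]
      exact exRadius_pos hn1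
    have hfc : f (c n) = n := by
      have := hfB n hn1 (c n) hdisc
      simp only [hcdef] at this ⊢
      rw [this]
      norm_num
    have he2 : e.2 = f (c n) := by rw [← hp, hp1]
    have hle : e.2 ≤ M := hM heE
    rw [he2, hfc] at hle
    exact absurd hle (not_le.2 (hMn n hn))
  -- the circle of radius 2 rₙ around the center is in the projection
  have hcircle : ∀ n : ℕ, N1 ≤ n → ∀ q : ℝ × ℝ, exG n q = 2 * exRadius n →
      q ∈ Prod.fst '' E := by
    intro n hn q hq
    have hn1 : 1 ≤ n := le_trans hN1one hn
    have hn0 : (1 : ℝ) ≤ n := by exact_mod_cast hn1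
    have hrn : 0 < exRadius n := exRadius_pos hn1
    have hrn' : 2 * exRadius n ≤ 1 / (2 * (n : ℝ)) := by
      unfold exRadius
      rw [mul_one_div, div_le_div_iff₀ (by nlinarith) (by nlinarith)]
      nlinarith
    have habs2 : |q.2 - 1 / n| ≤ 2 * exRadius n := hq ▸ abs_snd_le_exG n q
    have habs1 : |q.1| ≤ 2 * exRadius n := hq ▸ abs_fst_le_exG n q
    -- q.2 ≥ 0
    have hq2pos : 0 ≤ q.2 := by
      have h1 : 1 / (n : ℝ) - 2 * exRadius n ≤ q.2 := by
        have := abs_le.1 habs2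
        linarith [this.1]
      have h2 : (1 : ℝ) / (2 * n) ≤ 1 / n := by
        rw [div_le_div_iff₀ (by nlinarith) (by nlinarith)]
        nlinarith
      linarith
    -- q avoids every disc
    have hnotdisc : ∀ m : ℕ, 1 ≤ m → q ∉ exDisc m := by
      intro m hm1 hqm
      simp only [exDisc, mem_setOf_eq] at hqm
      have hqm' : exG m q < exRadius m := hqm
      by_cases hmn : m = n
      · subst hmn
        rw [hq] at hqm'
        linarith
      · have hsep := center_sep hn1 hm1 (Ne.symm hmn)
        have h1 : |q.2 - 1 / m| ≤ exG m q := abs_snd_le_exG m q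
        have h2 : |1 / (n : ℝ) - 1 / (m : ℝ)| ≤ |q.2 - 1 / n| + |q.2 - 1 / m| := by
          calc |1 / (n : ℝ) - 1 / (m : ℝ)| = |(1 / (n : ℝ) - q.2) + (q.2 - 1 / m)| := by
                ring_nf
          _ ≤ |1 / (n : ℝ) - q.2| + |q.2 - 1 / m| := abs_add_le _ _
          _ = |q.2 - 1 / n| + |q.2 - 1 / m| := by rw [abs_sub_comm]
        have hrm : 0 < exRadius m := exRadius_pos hm1
        linarith
    -- f q = 0
    have hfq : f q = 0 := hf0 q hq2pos hnotdisc
    -- (q, 0) is within ε of the base point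
    have hdist : dist ((q, f q) : (ℝ × ℝ) × ℝ) ((((0 : ℝ), (0 : ℝ)), (0 : ℝ))) < ε := by
      rw [Prod.dist_eq, Prod.dist_eq]
      have hq2abs : |q.2| ≤ 2 / (n : ℝ) := by
        have h1 : |q.2| ≤ |q.2 - 1 / n| + |(1 : ℝ) / n| := by
          calc |q.2| = |(q.2 - 1 / n) + 1 / n| := by ring_nf
          _ ≤ _ := abs_add_le _ _
        have h2 : |(1 : ℝ) / n| = 1 / n := abs_of_nonneg (by positivity)
        have h3 : 2 * exRadius n ≤ 1 / (n : ℝ) := le_trans hrn' (by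
          rw [div_le_div_iff₀ (by positivity) (by positivity)]
          nlinarith)
        have h4 : (1 : ℝ) / n + 1 / n = 2 / n := by ring
        linarith
      have hq1abs : |q.1| ≤ 2 / (n : ℝ) := by
        have h3 : 2 * exRadius n ≤ 1 / (n : ℝ) := le_trans hrn' (by
          rw [div_le_div_iff₀ (by positivity) (by positivity)]
          nlinarith)
        have : (1 : ℝ) / n ≤ 2 / n := by
          gcongr
          norm_num
        linarith
      have hεn := hnε n hn
      have hd1 : dist q.1 (0 : ℝ) < ε := by
        rw [Real.dist_eq, sub_zero]
        exact lt_of_le_of_lt hq1abs hεn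
      have hd2 : dist q.2 (0 : ℝ) < ε := by
        rw [Real.dist_eq, sub_zero]
        exact lt_of_le_of_lt hq2abs hεn
      have hd3 : dist (f q) (0 : ℝ) < ε := by
        rw [hfq, dist_self]
        exact hε
      have : dist q ((0 : ℝ), (0 : ℝ)) < ε := by
        rw [Prod.dist_eq]
        exact max_lt hd1 hd2
      exact max_lt this hd3
    have hqV : ((q, f q) : (ℝ × ℝ) × ℝ) ∈ V := hball hdist
    have hqU : ((q, f q) : (ℝ × ℝ) × ℝ) ∈ U := by
      rw [hUV]
      exact ⟨hqV, ⟨q, rfl⟩⟩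
    exact ⟨(q, f q), hUE hqU, rfl⟩
  -- the component of the center stays inside the circle
  have hcomp_sub : ∀ n : ℕ, N1 ≤ n →
      connectedComponentIn S (c n) ⊆ {p : ℝ × ℝ | exG n p < 2 * exRadius n} := by
    intro n hn p hp
    by_contra hge
    simp only [mem_setOf_eq, not_lt] at hge
    have hKconn : IsPreconnected (connectedComponentIn S (c n)) :=
      (isPreconnected_connectedComponentIn)
    have hcK : c n ∈ connectedComponentIn S (c n) :=
      mem_connectedComponentIn (hcenter n hn)
    have hKsub : connectedComponentIn S (c n) ⊆ S := connectedComponentIn_subset _ _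
    have hIcc : Icc (exG n (c n)) (exG n p) ⊆ exG n '' connectedComponentIn S (c n) :=
      hKconn.intermediate_value hcK hp (exG_continuous n).continuousOn
    have hgc : exG n (c n) = 0 := exG_center n
    have hmem : 2 * exRadius n ∈ Icc (exG n (c n)) (exG n p) := by
      rw [hgc]
      exact ⟨by have := exRadius_pos (le_trans hN1one hn); linarith, hge⟩
    obtain ⟨q, hqK, hqval⟩ := hIcc hmem
    have := hcircle n hn q hqval
    exact (hKsub hqK) this
  -- conclude: infinitely many components
  have hmaps : Set.MapsTo (fun n => connectedComponentIn S (c n)) (Set.Ici N1)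
      {C : Set (ℝ × ℝ) | ∃ x ∈ S, C = connectedComponentIn S x} := by
    intro n hn
    exact ⟨c n, hcenter n hn, rfl⟩
  have hinj : Set.InjOn (fun n => connectedComponentIn S (c n)) (Set.Ici N1) := by
    intro n hn m hm heq
    by_contra hne
    have hn1 : 1 ≤ n := le_trans hN1one hn
    have hm1 : 1 ≤ m := le_trans hN1one hm
    have heq' : connectedComponentIn S (c n) = connectedComponentIn S (c m) := heq
    have hcm : c m ∈ connectedComponentIn S (c n) := by
      rw [heq']
      exact mem_connectedComponentIn (hcenter m hm)
    have hlt := hcomp_sub n hn hcm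
    simp only [mem_setOf_eq] at hlt
    have hval : exG n (c m) = |1 / (m : ℝ) - 1 / (n : ℝ)| := exG_center_pair
    have hsep := center_sep hm1 hn1 (fun h => hne (h ▸ rfl))
    have hrm : 0 < exRadius m := exRadius_pos hm1
    rw [hval] at hlt
    linarith
  exact Set.infinite_of_injOn_mapsTo hinj hmaps (Set.Ici_infinite N1)
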